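/- Let k be a field and let R = k[x_1, x_2, ...]/(x_1, x_2, ...)^2 be the quotient of the polynomial ring in countably many variables by the square of the ideal generated by all the variables. Then R is not a coherent ring, and every R-module of finite projective dimension is projective; equivalently, every non-projective R-module has infinite projective dimension. In particular R is not regular, although every R-module admitting a resolution by degreewise finitely generated projective modules has finite projective dimension. -/

import Mathlib

open CategoryTheory CategoryTheory.Limits ZeroObject

noncomputable section

/-! ### The balanced tensor product `M ⊗_R N` of a right `R`-module `M` and a left
`R`-module `N`, defined as a quotient of `M ⊗_ℤ N`. -/

section Bal

variable (R : Type) [Ring R]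
variable (M : Type) [AddCommGroup M] [Module Rᵐᵒᵖ M]
variable (N : Type) [AddCommGroup N] [Module R N]

/-- The subgroup of balancing relations in `M ⊗_ℤ N`. -/
def balRel : Submodule ℤ (TensorProduct ℤ M N) :=
  Submodule.span ℤ { x | ∃ (r : R) (m : M) (n : N),
    x = (MulOpposite.op r • m) ⊗ₜ[ℤ] n - m ⊗ₜ[ℤ] (r • n) }

/-- The balanced tensor product `M ⊗_R N` of a right `R`-module `M` and a left
`R`-module `N`, as an abelian group (ℤ-module). -/
abbrev Bal := TensorProduct ℤ M N ⧸ balRel R M N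

variable {M N}
variable {M' M'' : Type} [AddCommGroup M'] [Module Rᵐᵒᵖ M'] [AddCommGroup M''] [Module Rᵐᵒᵖ M'']
variable {N' N'' : Type} [AddCommGroup N'] [Module R N'] [AddCommGroup N''] [Module R N'']

/-- Functoriality of the balanced tensor product. -/
def Bal.map (f : M →ₗ[Rᵐᵒᵖ] M') (g : N →ₗ[R] N') :
    Bal R M N →ₗ[ℤ] Bal R M' N' :=
  Submodule.mapQ _ _ (TensorProduct.map (f.restrictScalars ℤ) (g.restrictScalars ℤ)) (by
    rw [balRel, Submodule.span_le]
    rintro x ⟨r, m, n, rfl⟩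
    refine Submodule.subset_span ?_
    exact ⟨r, f m, g n, (map_sub (TensorProduct.map (f.restrictScalars ℤ) (g.restrictScalars ℤ)) _ _).trans (by simp [map_smul])⟩)

@[simp] lemma Bal.map_mk (f : M →ₗ[Rᵐᵒᵖ] M') (g : N →ₗ[R] N') (m : M) (n : N) :
    Bal.map R f g (Submodule.Quotient.mk (m ⊗ₜ[ℤ] n)) =
      Submodule.Quotient.mk (f m ⊗ₜ[ℤ] g n) := by
  rfl

lemma Bal.hom_ext {P : Type} [AddCommGroup P] [Module ℤ P]
    {h h' : Bal R M N →ₗ[ℤ] P}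
    (H : ∀ (m : M) (n : N), h (Submodule.Quotient.mk (m ⊗ₜ[ℤ] n)) =
      h' (Submodule.Quotient.mk (m ⊗ₜ[ℤ] n))) : h = h' := by
  apply Submodule.linearMap_qext
  exact TensorProduct.ext' H

lemma Bal.map_id :
    Bal.map R (LinearMap.id : M →ₗ[Rᵐᵒᵖ] M) (LinearMap.id : N →ₗ[R] N) = LinearMap.id := by
  apply Bal.hom_ext; intro m n; rw [Bal.map_mk]; rfl

lemma Bal.map_comp (f : M →ₗ[Rᵐᵒᵖ] M') (f' : M' →ₗ[Rᵐᵒᵖ] M'')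
    (g : N →ₗ[R] N') (g' : N' →ₗ[R] N'') :
    Bal.map R (f'.comp f) (g'.comp g) = (Bal.map R f' g').comp (Bal.map R f g) := by
  apply Bal.hom_ext; intro m n
  simp

lemma Bal.map_add_left (f f' : M →ₗ[Rᵐᵒᵖ] M') (g : N →ₗ[R] N') :
    Bal.map R (f + f') g = Bal.map R f g + Bal.map R f' g := by
  apply Bal.hom_ext; intro m n
  simp [← Submodule.Quotient.mk_add, ← TensorProduct.add_tmul]

lemma Bal.map_add_right (f : M →ₗ[Rᵐᵒᵖ] M') (g g' : N →ₗ[R] N') :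
    Bal.map R f (g + g') = Bal.map R f g + Bal.map R f g' := by
  apply Bal.hom_ext; intro m n
  simp [← Submodule.Quotient.mk_add, ← TensorProduct.tmul_add]

end Bal

/-! ### The balanced tensor product as a bifunctor -/

section balFunctor

variable (R : Type) [Ring R]

/-- The balanced tensor product bifunctor `ModuleCat Rᵐᵒᵖ ⥤ ModuleCat R ⥤ ModuleCat ℤ`. -/
def balFunctor : ModuleCat.{0} Rᵐᵒᵖ ⥤ ModuleCat.{0} R ⥤ ModuleCat.{0} ℤ where
  obj M :=
    { obj := fun N => ModuleCat.of ℤ (Bal R M N)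
      map := fun {N N'} g => ModuleCat.ofHom (Bal.map R LinearMap.id g.hom)
      map_id := fun N => by
        apply ModuleCat.hom_ext
        exact Bal.map_id R
      map_comp := fun {N₁ N₂ N₃} g g' => by
        apply ModuleCat.hom_ext
        have := Bal.map_comp R (LinearMap.id : M →ₗ[Rᵐᵒᵖ] M) LinearMap.id g.hom g'.hom
        rw [LinearMap.id_comp] at this
        exact this }
  map {M M'} f :=
    { app := fun N => ModuleCat.ofHom (Bal.map R f.hom LinearMap.id)
      naturality := fun {N N'} g => by
        apply ModuleCat.hom_ext
        show (Bal.map R f.hom LinearMap.id).comp (Bal.map R LinearMap.id g.hom)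
          = (Bal.map R LinearMap.id g.hom).comp (Bal.map R f.hom LinearMap.id)
        rw [← Bal.map_comp, ← Bal.map_comp]
        simp }
  map_id M := by
    apply NatTrans.ext
    funext N
    apply ModuleCat.hom_ext
    exact Bal.map_id R
  map_comp {M₁ M₂ M₃} f f' := by
    apply NatTrans.ext
    funext N
    apply ModuleCat.hom_ext
    show Bal.map R (f'.hom.comp f.hom) _ = (Bal.map R f'.hom LinearMap.id).comp (Bal.map R f.hom LinearMap.id)
    rw [← Bal.map_comp]
    simp

instance balFunctor_additive : (balFunctor R).Additive where
  map_add {M M'} {f f'} := by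
    apply NatTrans.ext
    funext N
    apply ModuleCat.hom_ext
    exact Bal.map_add_left R f.hom f'.hom LinearMap.id

instance balFunctor_obj_additive (M : ModuleCat.{0} Rᵐᵒᵖ) :
    ((balFunctor R).obj M).Additive where
  map_add {N N'} {g g'} := by
    apply ModuleCat.hom_ext
    exact Bal.map_add_right R LinearMap.id g.hom g'.hom

end balFunctor

/-! ### Module-theoretic notions over a not necessarily commutative ring.
Right `R`-modules are treated as (left) modules over the opposite ring `Rᵐᵒᵖ`. -/

section ModuleNotions

variable (R : Type) [Ring R]

/-- A left `R`-module `N` is flat if tensoring with it preserves injectivity of maps of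
right `R`-modules. -/
def FlatModule (N : Type) [AddCommGroup N] [Module R N] : Prop :=
  ∀ (M M' : Type) [AddCommGroup M] [Module Rᵐᵒᵖ M] [AddCommGroup M'] [Module Rᵐᵒᵖ M']
    (f : M →ₗ[Rᵐᵒᵖ] M'), Function.Injective f →
      Function.Injective (Bal.map R f (LinearMap.id : N →ₗ[R] N))

/-- Vanishing of `Ext¹_R(X, Y)`, expressed by the splitting of every short exact
sequence `0 → Y → E → X → 0`. -/
def ext1Zero (X Y : Type) [AddCommGroup X] [Module R X] [AddCommGroup Y] [Module R Y] :
    Prop :=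
  ∀ (E : Type) [AddCommGroup E] [Module R E] (i : Y →ₗ[R] E) (p : E →ₗ[R] X),
    Function.Injective i → Function.Surjective p → Function.Exact i p →
      ∃ s : X →ₗ[R] E, p.comp s = LinearMap.id

/-- A left `R`-module `C` is cotorsion if `Ext¹_R(F, C) = 0` for every flat left
`R`-module `F`. -/
def CotorsionModule (C : Type) [AddCommGroup C] [Module R C] : Prop :=
  ∀ (F : Type) [AddCommGroup F] [Module R F], FlatModule R F → ext1Zero R F C

/-- A left `R`-module `E` is fp-injective if `Ext¹_R(F, E) = 0` for every finitely
presented left `R`-module `F`. -/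
def FpInjectiveModule (E : Type) [AddCommGroup E] [Module R E] : Prop :=
  ∀ (F : Type) [AddCommGroup F] [Module R F],
    Module.FinitePresentation R F → ext1Zero R F E

/-- A left `R`-module `P` is fp-projective if `Ext¹_R(P, E) = 0` for every fp-injective
left `R`-module `E`. -/
def FpProjectiveModule (P : Type) [AddCommGroup P] [Module R P] : Prop :=
  ∀ (E : Type) [AddCommGroup E] [Module R E], FpInjectiveModule R E → ext1Zero R P E

/-- `ProjDimLE R n M` says that the left `R`-module `M` has projective dimension at
most `n`, i.e. it admits a projective resolution of length `n`. -/
def ProjDimLE : ℕ → ∀ (M : Type) [AddCommGroup M] [Module R M], Prop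
  | 0 => fun M _ _ => Module.Projective R M
  | n + 1 => fun M _ _ =>
      ∃ (P : Type) (_ : AddCommGroup P) (_ : Module R P) (p : P →ₗ[R] M),
        Module.Projective R P ∧ Function.Surjective p ∧
          ProjDimLE n (LinearMap.ker p)

/-- A left `R`-module has finite projective dimension if it admits a finite projective
resolution. -/
def FiniteProjDim (M : Type) [AddCommGroup M] [Module R M] : Prop :=
  ∃ n : ℕ, ProjDimLE R n M

/-- `FlatDimLE R n M` says that the left `R`-module `M` has flat dimension at most `n`,
i.e. it admits a flat resolution of length `n`. -/
def FlatDimLE : ℕ → ∀ (M : Type) [AddCommGroup M] [Module R M], Prop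
  | 0 => fun M _ _ => FlatModule R M
  | n + 1 => fun M _ _ =>
      ∃ (F : Type) (_ : AddCommGroup F) (_ : Module R F) (p : F →ₗ[R] M),
        FlatModule R F ∧ Function.Surjective p ∧
          FlatDimLE n (LinearMap.ker p)

/-- A left `R`-module has finite flat dimension if it admits a finite flat resolution. -/
def FiniteFlatDim (M : Type) [AddCommGroup M] [Module R M] : Prop :=
  ∃ n : ℕ, FlatDimLE R n M

/-- `R` is right coherent: every finitely generated right ideal of `R` is finitely
presented as a right `R`-module. -/
def RightCoherent : Prop :=
  ∀ I : Submodule Rᵐᵒᵖ R, I.FG → Module.FinitePresentation Rᵐᵒᵖ I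

/-- `R` is right regular: every finitely generated right ideal of `R` has finite
projective dimension as a right `R`-module. -/
def RightRegular : Prop :=
  ∀ I : Submodule Rᵐᵒᵖ R, I.FG → FiniteProjDim Rᵐᵒᵖ I

/-- `R` is left coherent: every finitely generated left ideal of `R` is finitely
presented as a left `R`-module. -/
def LeftCoherent : Prop :=
  ∀ I : Submodule R R, I.FG → Module.FinitePresentation R I

/-- `R` is left regular: every finitely generated left ideal of `R` has finite
projective dimension as a left `R`-module. -/
def LeftRegular : Prop :=
  ∀ I : Submodule R R, I.FG → FiniteProjDim R I

/-- `R` is von Neumann regular if every element `a` has a quasi-inverse `b` with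
`a * b * a = a`. -/
def VonNeumannRegular : Prop := ∀ a : R, ∃ b : R, a * b * a = a

/-- An object `M` of `ModuleCat A` admits a projective resolution by degreewise
finitely generated projective modules. -/
def HasDegreewiseFGProjectiveResolution {A : Type} [Ring A] (M : ModuleCat.{0} A) : Prop :=
  ∃ res : ProjectiveResolution M, ∀ n : ℕ, Module.Finite A (res.complex.X n)

end ModuleNotions

/-! ### Complexes -/

section Complexes

variable (A : Type) [Ring A]

/-- Unbounded (cochain) complexes of modules. -/
abbrev Cx := CochainComplex (ModuleCat.{0} A) ℤ

/-- A complex is acyclic if it is exact in every degree. -/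
def IsAcyclic (C : Cx A) : Prop := ∀ n : ℤ, C.ExactAt n

/-- Acyclicity for complexes of abelian groups. -/
def IsAcyclicAb (C : CochainComplex AddCommGrpCat.{0} ℤ) : Prop := ∀ n : ℤ, C.ExactAt n

/-- Acyclicity for complexes of ℤ-modules. -/
def IsAcyclicZMod (C : CochainComplex (ModuleCat.{0} ℤ) ℤ) : Prop := ∀ n : ℤ, C.ExactAt n

/-- A complex is contractible if it is homotopy equivalent to the zero complex. -/
def IsContractible (C : Cx A) : Prop := Nonempty (HomotopyEquiv C (0 : Cx A))

variable {A}

/-- A complex `P` is semi-projective if it consists of projective modules and the total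
Hom complex `Hom(P, C)` is acyclic for every acyclic complex `C`. -/
def SemiProjective (P : Cx A) : Prop :=
  (∀ n : ℤ, Module.Projective A (P.X n)) ∧
  ∀ C : Cx A, IsAcyclic A C → IsAcyclicAb (CochainComplex.HomComplex P C)

/-- A complex `I` is semi-injective if it consists of injective modules and the total
Hom complex `Hom(C, I)` is acyclic for every acyclic complex `C`. -/
def SemiInjective (I : Cx A) : Prop :=
  (∀ n : ℤ, Module.Injective A (I.X n)) ∧
  ∀ C : Cx A, IsAcyclic A C → IsAcyclicAb (CochainComplex.HomComplex C I)

variable (A)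

/-- A complex `E` (of right modules, say) is semi-fp-injective if it consists of
fp-injective modules and the total Hom complex `Hom(X, E)` is acyclic for every acyclic
complex `X` whose cycle modules are all fp-projective. -/
def SemiFpInjective (E : Cx A) : Prop :=
  (∀ n : ℤ, FpInjectiveModule A (E.X n)) ∧
  ∀ X : Cx A, IsAcyclic A X → (∀ n : ℤ, FpProjectiveModule A (X.cycles n)) →
    IsAcyclicAb (CochainComplex.HomComplex X E)

variable {A}

end Complexes

section TensorComplexes

variable (R : Type) [Ring R]

/-- The total tensor complex `K ⊗_R L` of a complex `K` of right `R`-modules and a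
complex `L` of left `R`-modules. -/
def tensorComplex (K : Cx Rᵐᵒᵖ) (L : Cx R) : CochainComplex (ModuleCat.{0} ℤ) ℤ :=
  HomologicalComplex.mapBifunctor K L (balFunctor R) (ComplexShape.up ℤ)

/-- A complex `F` of left `R`-modules is semi-flat if it consists of flat modules and
the tensor complex `K ⊗_R F` is acyclic for every acyclic complex `K` of right
`R`-modules. -/
def SemiFlat (F : Cx R) : Prop :=
  (∀ n : ℤ, FlatModule R (F.X n)) ∧
  ∀ K : Cx Rᵐᵒᵖ, IsAcyclic Rᵐᵒᵖ K → IsAcyclicZMod (tensorComplex R K F)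

/-- An acyclic complex `X` of left `R`-modules is pure acyclic if each short exact
sequence `0 → Z^n(X) → X^n → Z^{n+1}(X) → 0` of cycle modules is pure exact, i.e.
stays a short exact sequence after tensoring with every right `R`-module `M`. -/
def PureAcyclic (X : Cx R) : Prop :=
  IsAcyclic R X ∧
  ∀ (n : ℤ) (M : ModuleCat.{0} Rᵐᵒᵖ),
    Function.Injective (((balFunctor R).obj M).map (X.iCycles n)) ∧
    Function.Exact (((balFunctor R).obj M).map (X.iCycles n))
      (((balFunctor R).obj M).map (X.toCycles n (n + 1))) ∧
    Function.Surjective (((balFunctor R).obj M).map (X.toCycles n (n + 1)))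

/-- `S ⊗_R -` is exact and reflects exactness, where `S` is a right `R`-module. -/
def FaithfullyFlatRight (S : Type) [AddCommGroup S] [Module Rᵐᵒᵖ S] : Prop :=
  ∀ (N₁ N₂ N₃ : Type) [AddCommGroup N₁] [Module R N₁] [AddCommGroup N₂] [Module R N₂]
    [AddCommGroup N₃] [Module R N₃] (g₁ : N₁ →ₗ[R] N₂) (g₂ : N₂ →ₗ[R] N₃),
    Function.Exact g₁ g₂ ↔
      Function.Exact (Bal.map R (LinearMap.id : S →ₗ[Rᵐᵒᵖ] S) g₁)
        (Bal.map R (LinearMap.id : S →ₗ[Rᵐᵒᵖ] S) g₂)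

end TensorComplexes


/-- The local ring `R = k[x₁, x₂, …]/(x₁, x₂, …)²`: the quotient of the polynomial ring
in countably many variables over `k` by the square of the ideal generated by all the
variables. -/
abbrev ExampleRing (k : Type) [Field k] : Type :=
  MvPolynomial ℕ k ⧸
    (Ideal.span (Set.range (MvPolynomial.X : ℕ → MvPolynomial ℕ k)) ^ 2)

/-! Write `m` for the maximal ideal of `R`, so that `m² = 0`, `m ≠ 0` and `m` is not finitely
generated. Since `m² = 0`, Nakayama's lemma holds for all modules, so lifting a basis of the
`R/m`-vector space `M/mM` gives a free cover `F → M` whose kernel `K` lies in `mF`, hence is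
killed by `m`. A projective module `P` killed by `m` vanishes: the coordinates of `x ∈ P` in a
free module having `P` as a summand annihilate `m`, so they lie in `m`, and `x ∈ mP = 0`.
A finitely presented module killed by `m` vanishes as well: the kernel of its minimal cover
`Rⁿ → K` is `mⁿ`, which would make `m` finitely generated. By Schanuel's lemma, `K` is
projective when `M` has finite projective dimension, and finitely presented when `M` has a
resolution by finitely generated projectives; either way `K = 0` and `M ≅ F` is free. The ideal
`(x₀) ≅ R/m` is nonzero and killed by `m`, so it is neither finitely presented nor of finite
projective dimension. -/

open Function LinearMap IsLocalRing

universe u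

section SquareZeroIdeal

variable {R M : Type*} [CommRing R] [AddCommGroup M] [Module R M] {I : Ideal R}

lemma Submodule.smul_smul_top_eq_bot (hI : I ^ 2 = ⊥) : I • (I • ⊤ : Submodule R M) = ⊥ := by
  rw [← Submodule.mul_smul, ← sq, hI, Submodule.bot_smul]

lemma Submodule.eq_top_of_sup_smul_top_eq_top (hI : I ^ 2 = ⊥) {N : Submodule R M}
    (h : N ⊔ I • ⊤ = ⊤) : N = ⊤ := by
  have hle : (I • ⊤ : Submodule R M) ≤ N :=
    calc I • ⊤ = I • (N ⊔ I • ⊤) := by rw [h]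
      _ = I • N := by rw [Submodule.smul_sup, smul_smul_top_eq_bot hI, sup_bot_eq]
      _ ≤ N := Submodule.smul_le_right
  rwa [sup_eq_left.mpr hle] at h

lemma Submodule.isTorsionBySet_of_le_smul_top (hI : I ^ 2 = ⊥) {N : Submodule R M}
    (hN : N ≤ I • ⊤) : Module.IsTorsionBySet R N I := fun x a => by
  have h := Submodule.smul_mem_smul a.2 (hN x.2)
  rw [smul_smul_top_eq_bot hI, Submodule.mem_bot] at h
  exact Subtype.ext h

end SquareZeroIdeal

lemma Finsupp.mem_ideal_smul_top_of_forall_mem {R ι : Type*} [CommRing R] {I : Ideal R}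
    {d : ι →₀ R} (hd : ∀ i, d i ∈ I) : d ∈ I • (⊤ : Submodule R (ι →₀ R)) := by
  rw [← d.sum_single]
  refine Submodule.sum_mem _ fun i _ => ?_
  rw [← mul_one (d i), ← smul_eq_mul, ← Finsupp.smul_single]
  exact Submodule.smul_mem_smul (hd i) trivial

lemma Module.Projective.of_surjective_of_subsingleton_ker {R P M : Type*} [CommRing R]
    [AddCommGroup P] [Module R P] [AddCommGroup M] [Module R M] [Module.Projective R P]
    {q : P →ₗ[R] M} (hq : Surjective q) [Subsingleton (ker q)] : Module.Projective R M :=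
  .of_equiv (LinearEquiv.ofBijective q ⟨ker_eq_bot.mp Submodule.eq_bot_of_subsingleton, hq⟩)

lemma Module.Finite.of_isTorsionBySet_of_forall_sub_algebraMap_mem {k R M : Type*} [CommRing k]
    [CommRing R] [Algebra k R] [AddCommGroup M] [Module k M] [Module R M] [IsScalarTower k R M]
    {I : Ideal R} (hI : ∀ r : R, ∃ c : k, r - algebraMap k R c ∈ I)
    (hM : Module.IsTorsionBySet R M I) [Module.Finite R M] : Module.Finite k M := by
  obtain ⟨s, hs⟩ := Module.Finite.fg_top (R := R) (M := M)
  refine ⟨s, eq_top_iff.mpr ?_⟩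
  rintro x -
  have hx : x ∈ Submodule.span R (s : Set M) := hs ▸ trivial
  induction hx using Submodule.span_induction with
  | mem y hy => exact Submodule.subset_span hy
  | zero => exact zero_mem _
  | add _ _ _ _ h₁ h₂ => exact add_mem h₁ h₂
  | smul r y _ hy =>
    obtain ⟨c, hc⟩ := hI r
    rw [← sub_add_cancel r (algebraMap k R c), add_smul, @hM y ⟨_, hc⟩, zero_add,
      algebraMap_smul]
    exact Submodule.smul_mem _ c hy

section Schanuel

variable {R M P Q : Type*} [CommRing R] [AddCommGroup M] [Module R M] [AddCommGroup P]
  [Module R P] [AddCommGroup Q] [Module R Q]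

abbrev LinearMap.pullback (p : P →ₗ[R] M) (q : Q →ₗ[R] M) : Submodule R (P × Q) :=
  (p ∘ₗ fst R P Q).eqLocus (q ∘ₗ snd R P Q)

lemma LinearMap.mem_pullback {p : P →ₗ[R] M} {q : Q →ₗ[R] M} {x : P × Q} :
    x ∈ pullback p q ↔ p x.1 = q x.2 := Iff.rfl

def LinearMap.pullbackEquivKerProd (p : P →ₗ[R] M) (q : Q →ₗ[R] M)
    (hp : Surjective p) [Module.Projective R Q] : pullback p q ≃ₗ[R] (ker p × Q) :=
  let f : ker p →ₗ[R] pullback p q :=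
    codRestrict _ (inl R P Q ∘ₗ (ker p).subtype) fun a => by simp
  let g : pullback p q →ₗ[R] Q := snd R P Q ∘ₗ (pullback p q).subtype
  have hg : Surjective g := fun b => by
    obtain ⟨a, ha⟩ := hp (q b)
    exact ⟨⟨(a, b), ha⟩, rfl⟩
  have hf : Injective f := fun a a' h => Subtype.ext (congrArg (fun x : pullback p q => x.1.1) h)
  have hfg : Exact f g := by
    rintro ⟨⟨a, b⟩, hab⟩
    constructor
    · rintro (rfl : b = 0)
      exact ⟨⟨a, by simpa [mem_pullback] using hab⟩, rfl⟩
    · rintro ⟨a', h⟩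
      rw [← h]
      rfl
  (hfg.splitSurjectiveEquiv hf ⟨_, (Module.projective_lifting_property g .id hg).choose_spec⟩).1

def LinearMap.pullbackComm (p : P →ₗ[R] M) (q : Q →ₗ[R] M) :
    pullback p q ≃ₗ[R] pullback q p :=
  (LinearEquiv.prodComm R P Q).ofSubmodules _ _ <| by
    ext ⟨b, a⟩
    simp [Submodule.mem_map_equiv, eq_comm]

/-- Schanuel's lemma. -/
def LinearMap.kerProdEquivKerProd (p : P →ₗ[R] M) (q : Q →ₗ[R] M)
    (hp : Surjective p) (hq : Surjective q) [Module.Projective R P] [Module.Projective R Q] :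
    (ker p × Q) ≃ₗ[R] (ker q × P) :=
  (pullbackEquivKerProd p q hp).symm ≪≫ₗ pullbackComm p q ≪≫ₗ pullbackEquivKerProd q p hq

end Schanuel

section SquareZeroLocalRing

variable {R : Type*} [CommRing R] [IsLocalRing R]

lemma IsLocalRing.mem_maximalIdeal_of_forall_mul_eq_zero (hm : maximalIdeal R ≠ ⊥) {c : R}
    (hc : ∀ a ∈ maximalIdeal R, a * c = 0) : c ∈ maximalIdeal R := by
  by_contra h
  exact hm (eq_bot_iff.mpr fun a ha =>
    ((notMem_maximalIdeal.mp h).mul_left_eq_zero.mp (hc a ha)))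

lemma Module.Projective.subsingleton_of_isTorsionBySet (hm : maximalIdeal R ≠ ⊥)
    {P : Type*} [AddCommGroup P] [Module R P] [Module.Projective R P]
    (hP : Module.IsTorsionBySet R P (maximalIdeal R)) : Subsingleton P := by
  obtain ⟨s, hs⟩ := Module.Projective.out (R := R) (P := P)
  refine subsingleton_of_forall_eq 0 fun x => ?_
  have hcoord : ∀ j, s x j ∈ maximalIdeal R := fun j =>
    mem_maximalIdeal_of_forall_mul_eq_zero hm fun a ha => by
      have h : s (a • x) = a • s x := map_smul s a x
      rw [@hP x ⟨a, ha⟩, map_zero] at h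
      simpa using congrArg (· j) h.symm
  rw [← hs x, Finsupp.linearCombination_apply]
  exact Finset.sum_eq_zero fun j _ => @hP j ⟨_, hcoord j⟩

variable (hm2 : maximalIdeal R ^ 2 = ⊥)
include hm2

theorem IsLocalRing.exists_finsupp_surjective_ker_le_smul_top
    (M : Type u) [AddCommGroup M] [Module R M] :
    ∃ (ι : Type u) (q : (ι →₀ R) →ₗ[R] M), Surjective q ∧ ker q ≤ maximalIdeal R • ⊤ ∧
      (Module.Finite R M → Finite ι) := by
  set m := maximalIdeal R
  let := Ideal.Quotient.field m
  let V := M ⧸ (m • ⊤ : Submodule R M)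
  let π : M →ₗ[R] V := Submodule.mkQ _
  let ι := Module.Basis.ofVectorSpaceIndex (R ⧸ m) V
  let b : Module.Basis ι (R ⧸ m) V := Module.Basis.ofVectorSpace (R ⧸ m) V
  choose lift hlift using fun i => Submodule.mkQ_surjective (m • ⊤ : Submodule R M) (b i)
  let q := Finsupp.linearCombination R lift
  let red := Finsupp.mapRange.linearMap (Ideal.Quotient.mkₐ R m).toLinearMap (α := ι)
  -- modulo `m`, `q` is the isomorphism `(ι →₀ R ⧸ m) ≃ M ⧸ m • ⊤` given by `b`
  have hq : π ∘ₗ q = ((Finsupp.linearCombination (R ⧸ m) b).restrictScalars R) ∘ₗ red := by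
    ext i
    simp [q, red, π, hlift]
  refine ⟨_, q, ?_, fun d hd => ?_, fun _ => Module.Finite.finite_basis b⟩
  · have hred : Surjective red :=
      Finsupp.mapRange_surjective _ (map_zero _) Ideal.Quotient.mk_surjective
    have hπq : Surjective (π ∘ₗ q) := by
      rw [hq, coe_comp]
      exact Surjective.comp (fun v => ⟨b.repr v, b.linearCombination_repr v⟩) hred
    refine range_eq_top.mp (Submodule.eq_top_of_sup_smul_top_eq_top hm2 ?_)
    rw [sup_comm, ← Submodule.map_mkQ_eq_top, ← range_comp]
    exact range_eq_top.mpr hπq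
  · have h0 : Finsupp.linearCombination (R ⧸ m) b (red d) = 0 := by
      simpa [q, mem_ker.mp hd] using (congrArg (· d) hq).symm
    exact Finsupp.mem_ideal_smul_top_of_forall_mem fun i => Ideal.Quotient.eq_zero_iff_mem.mp
      (by simpa [red] using congrArg (· i) (b.linearIndependent (h0.trans (map_zero _).symm)))

theorem IsLocalRing.projective_of_projective_ker (hm : maximalIdeal R ≠ ⊥) {P M : Type u}
    [AddCommGroup P] [Module R P] [AddCommGroup M] [Module R M] [Module.Projective R P]
    {p : P →ₗ[R] M} (hp : Surjective p) [Module.Projective R (ker p)] :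
    Module.Projective R M := by
  obtain ⟨ι, q, hq, hker, -⟩ := exists_finsupp_surjective_ker_le_smul_top hm2 M
  have : Module.Projective R (ker q × P) := .of_equiv (kerProdEquivKerProd p q hp hq)
  have : Module.Projective R (ker q) := .of_split (inl R _ P) (fst R _ P) (fst_comp_inl R _ P)
  have : Subsingleton (ker q) := Module.Projective.subsingleton_of_isTorsionBySet hm
    (Submodule.isTorsionBySet_of_le_smul_top hm2 hker)
  exact .of_surjective_of_subsingleton_ker hq

variable (hfg : ¬ (maximalIdeal R).FG)
include hfg

theorem IsLocalRing.subsingleton_of_finitePresentation_of_isTorsionBySet {K : Type*}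
    [AddCommGroup K] [Module R K] [Module.FinitePresentation R K]
    (hK : Module.IsTorsionBySet R K (maximalIdeal R)) :
    Subsingleton K := by
  obtain ⟨ι, c, hc, hker, hfin⟩ := exists_finsupp_surjective_ker_le_smul_top hm2 K
  have := hfin inferInstance
  have hker_eq : ker c = maximalIdeal R • ⊤ := le_antisymm hker <| Submodule.smul_le.mpr
    fun a ha d _ => by rw [mem_ker, map_smul, @hK (c d) ⟨a, ha⟩]
  rcases isEmpty_or_nonempty ι with hι | ⟨⟨j⟩⟩
  · exact hc.subsingleton
  refine absurd ?_ hfg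
  have hmap : (maximalIdeal R • ⊤ : Submodule R (ι →₀ R)).map (Finsupp.lapply j) =
      maximalIdeal R := by
    rw [Submodule.map_smul'', Submodule.map_top,
      range_eq_top.mpr fun r => ⟨Finsupp.single j r, by simp⟩, smul_eq_mul, Ideal.mul_top]
  rw [← hmap, ← hker_eq]
  exact (Module.FinitePresentation.fg_ker c hc).map _

theorem IsLocalRing.projective_of_finitePresentation_ker {X M : Type u}
    [AddCommGroup X] [Module R X] [AddCommGroup M] [Module R M] [Module.Projective R X]
    [Module.Finite R X] {ε : X →ₗ[R] M} (hε : Surjective ε)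
    [Module.FinitePresentation R (ker ε)] : Module.Projective R M := by
  have : Module.Finite R M := .of_surjective ε hε
  obtain ⟨ι, q, hq, hker, hfin⟩ := exists_finsupp_surjective_ker_le_smul_top hm2 M
  have := hfin inferInstance
  have : Module.FinitePresentation R X := Module.finitePresentation_of_projective R X
  have := Module.FinitePresentation.of_equiv (M := ker ε × (ι →₀ R)) (N := ker q × X)
    (kerProdEquivKerProd ε q hε hq)
  have : Module.FinitePresentation R (ker q) :=
    Module.finitePresentation_of_split_exact (N := ker q × X) (inl R _ X) (snd R _ X) (inr R _ X)
      (snd_comp_inr R _ X) inl_injective .inl_snd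
  have : Subsingleton (ker q) := subsingleton_of_finitePresentation_of_isTorsionBySet hm2 hfg
    (Submodule.isTorsionBySet_of_le_smul_top hm2 hker)
  exact .of_surjective_of_subsingleton_ker hq

end SquareZeroLocalRing

lemma MvPolynomial.mem_idealOfVars_iff {σ R : Type*} [CommSemiring R] {p : MvPolynomial σ R} :
    p ∈ idealOfVars σ R ↔ constantCoeff p = 0 := by
  simpa [constantCoeff_eq, Finsupp.degree_eq_zero_iff] using mem_pow_idealOfVars_iff' 1 p

namespace ExampleRing

open MvPolynomial

variable (k : Type) [Field k]

def residue : ExampleRing k →+* k :=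
  Ideal.Quotient.lift _ constantCoeff fun p hp =>
    (mem_pow_idealOfVars_iff' 2 p).mp hp 0 (by simp)

@[simp] lemma residue_algebraMap (c : k) : residue k (algebraMap k _ c) = c := by
  show constantCoeff (C c) = c
  exact constantCoeff_C _ c

lemma residue_surjective : Surjective (residue k) := fun c => ⟨_, residue_algebraMap k c⟩

lemma mul_eq_zero_of_residue_eq_zero {r s : ExampleRing k} (hr : residue k r = 0)
    (hs : residue k s = 0) : r * s = 0 := by
  obtain ⟨p, rfl⟩ := Ideal.Quotient.mk_surjective r
  obtain ⟨q, rfl⟩ := Ideal.Quotient.mk_surjective s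
  rw [← map_mul, Ideal.Quotient.eq_zero_iff_mem, sq]
  exact Ideal.mul_mem_mul (mem_idealOfVars_iff.mpr hr) (mem_idealOfVars_iff.mpr hs)

instance : IsLocalRing (ExampleRing k) := by
  have hmax := RingHom.ker_isMaximal_of_surjective _ (residue_surjective k)
  refine .of_unique_max_ideal
    ⟨_, hmax, fun J hJ => (hmax.eq_of_le hJ.ne_top fun r hr => ?_).symm⟩
  have hr2 : r ^ 2 = 0 := (pow_two r).trans (mul_eq_zero_of_residue_eq_zero k hr hr)
  exact hJ.isPrime.mem_of_pow_mem 2 (hr2 ▸ J.zero_mem)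

lemma maximalIdeal_eq_ker_residue : maximalIdeal (ExampleRing k) = RingHom.ker (residue k) :=
  (eq_maximalIdeal (RingHom.ker_isMaximal_of_surjective _ (residue_surjective k))).symm

lemma maximalIdeal_sq_eq_bot : maximalIdeal (ExampleRing k) ^ 2 = ⊥ := by
  rw [maximalIdeal_eq_ker_residue]
  refine (sq _).trans (eq_bot_iff.mpr ?_)
  exact Ideal.mul_le.mpr fun r hr s hs =>
    (mul_eq_zero_of_residue_eq_zero k hr hs).symm ▸ zero_mem _

def var (n : ℕ) : ExampleRing k := Ideal.Quotient.mk _ (X n)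

lemma var_mem_maximalIdeal (n : ℕ) : var k n ∈ maximalIdeal (ExampleRing k) := by
  rw [maximalIdeal_eq_ker_residue, RingHom.mem_ker]
  exact constantCoeff_X k n

lemma linearIndependent_var : LinearIndependent k (var k) := by
  refine linearIndependent_iff'.mpr fun s g hg i hi => ?_
  have hmem : ∑ n ∈ s, g n • X n ∈ idealOfVars ℕ k ^ 2 := by
    rw [← Ideal.Quotient.eq_zero_iff_mem, ← Ideal.Quotient.mkₐ_eq_mk k, map_sum]
    simpa [var, Ideal.Quotient.mkₐ_eq_mk] using hg
  simpa [coeff_sum, coeff_X, Finsupp.single_left_inj one_ne_zero, hi] using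
    (mem_pow_idealOfVars_iff' 2 _).mp hmem (Finsupp.single i 1) (by simp)

lemma var_ne_zero (n : ℕ) : var k n ≠ 0 := (linearIndependent_var k).ne_zero n

lemma maximalIdeal_ne_bot : maximalIdeal (ExampleRing k) ≠ ⊥ := fun h =>
  var_ne_zero k 0 (by simpa [h] using var_mem_maximalIdeal k 0)

lemma isTorsionBySet_span_var (n : ℕ) :
    Module.IsTorsionBySet (ExampleRing k) (Ideal.span {var k n}) (maximalIdeal (ExampleRing k)) :=
  Submodule.isTorsionBySet_of_le_smul_top (maximalIdeal_sq_eq_bot k) <| by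
    rw [smul_eq_mul, Ideal.mul_top, Ideal.span_le, Set.singleton_subset_iff]
    exact var_mem_maximalIdeal k n

instance (n : ℕ) : Nontrivial (Ideal.span {var k n}) :=
  Submodule.nontrivial_iff_ne_bot.mpr (by simpa using var_ne_zero k n)

lemma not_fg_maximalIdeal : ¬ (maximalIdeal (ExampleRing k)).FG := fun hfg => by
  have : Module.Finite (ExampleRing k) (maximalIdeal (ExampleRing k)) := .of_fg hfg
  have : Module.Finite k (maximalIdeal (ExampleRing k)) :=
    .of_isTorsionBySet_of_forall_sub_algebraMap_mem
      (fun r => ⟨residue k r, by simp [maximalIdeal_eq_ker_residue]⟩)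
      (Submodule.isTorsionBySet_of_le_smul_top (maximalIdeal_sq_eq_bot k)
        (by rw [smul_eq_mul, Ideal.mul_top]))
  exact Module.Finite.not_linearIndependent_of_infinite _
    (.of_comp ((maximalIdeal _).subtype.restrictScalars k) (linearIndependent_var k) :
      LinearIndependent k fun n => (⟨var k n, var_mem_maximalIdeal k n⟩ : maximalIdeal _))

end ExampleRing

section ProjectiveDimension

variable {R : Type} [CommRing R] [IsLocalRing R] (hm2 : maximalIdeal R ^ 2 = ⊥)
include hm2

theorem IsLocalRing.projective_of_projDimLE (hm : maximalIdeal R ≠ ⊥) :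
    ∀ (n : ℕ) (M : Type) [AddCommGroup M] [Module R M], ProjDimLE R n M → Module.Projective R M
  | 0, _, _, _, h => h
  | n + 1, _, _, _, ⟨_, _, _, _, _, hp, hker⟩ =>
    have := projective_of_projDimLE hm n _ hker
    projective_of_projective_ker hm2 hm hp

end ProjectiveDimension

lemma CategoryTheory.ProjectiveResolution.finitePresentation_ker_π_f_zero {A : Type} [Ring A]
    {M : ModuleCat.{0} A} (P : ProjectiveResolution M) [Module.Finite A (P.complex.X 1)]
    [Module.Finite A (P.complex.X 2)] : Module.FinitePresentation A (ker (P.π.f 0).hom) := by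
  have : Module.Projective A (P.complex.X 1) :=
    (IsProjective.iff_projective _).mpr (P.projective 1)
  have : Module.FinitePresentation A (P.complex.X 1) := Module.finitePresentation_of_projective _ _
  have h₀ : range (P.complex.d 1 0).hom = ker (P.π.f 0).hom :=
    (ShortComplex.exact_of_g_is_cokernel (.mk _ _ P.complex_d_comp_π_f_zero)
      P.isColimitCokernelCofork).moduleCat_range_eq_ker
  have h₁ : range (P.complex.d 2 1).hom = ker (P.complex.d 1 0).hom :=
    (P.exact_succ 0).moduleCat_range_eq_ker
  let d := (P.complex.d 1 0).hom.codRestrict _ fun x => h₀ ▸ mem_range_self _ x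
  refine Module.finitePresentation_of_surjective d (fun ⟨y, hy⟩ => ?_) ?_
  · obtain ⟨x, hx⟩ := h₀ ▸ hy
    exact ⟨x, Subtype.ext hx⟩
  · rw [ker_codRestrict, ← h₁]
    exact Submodule.fg_range _

/-- **Example 2.2.** Let `k` be a field and `R = k[x₁, x₂, …]/(x₁, x₂, …)²`.  Then `R` is
not coherent, every `R`-module of finite projective dimension is projective
(equivalently, every non-projective `R`-module has infinite projective dimension), `R` is
not regular, and yet every `R`-module admitting a resolution by degreewise finitely
generated projective modules has finite projective dimension. -/
theorem example_noncoherent (k : Type) [Field k] :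
    (¬ ∀ I : Ideal (ExampleRing k), I.FG → Module.FinitePresentation (ExampleRing k) I) ∧
    (∀ (M : Type) [AddCommGroup M] [Module (ExampleRing k) M],
      FiniteProjDim (ExampleRing k) M → Module.Projective (ExampleRing k) M) ∧
    (∀ (M : Type) [AddCommGroup M] [Module (ExampleRing k) M],
      ¬ Module.Projective (ExampleRing k) M → ¬ FiniteProjDim (ExampleRing k) M) ∧
    (¬ ∀ I : Ideal (ExampleRing k), I.FG → FiniteProjDim (ExampleRing k) I) ∧
    (∀ M : ModuleCat.{0} (ExampleRing k), HasDegreewiseFGProjectiveResolution M →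
      FiniteProjDim (ExampleRing k) M) := by
  have hm2 := ExampleRing.maximalIdeal_sq_eq_bot k
  have hm := ExampleRing.maximalIdeal_ne_bot k
  have hfg := ExampleRing.not_fg_maximalIdeal k
  have projective_of_finiteProjDim (M : Type) [AddCommGroup M] [Module (ExampleRing k) M]
      (h : FiniteProjDim (ExampleRing k) M) : Module.Projective (ExampleRing k) M :=
    projective_of_projDimLE hm2 hm _ M h.choose_spec
  let I₀ := Ideal.span {ExampleRing.var k 0}
  have hI₀ : I₀.FG := Submodule.fg_span_singleton _
  have hI₀tors := ExampleRing.isTorsionBySet_span_var k 0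
  refine ⟨fun h => ?_, projective_of_finiteProjDim, fun M _ _ hM h => hM
    (projective_of_finiteProjDim M h), fun h => ?_, fun M ⟨P, hP⟩ => ?_⟩
  · have := h I₀ hI₀
    exact not_subsingleton I₀
      (subsingleton_of_finitePresentation_of_isTorsionBySet hm2 hfg hI₀tors)
  · have := projective_of_finiteProjDim I₀ (h I₀ hI₀)
    exact not_subsingleton I₀ (Module.Projective.subsingleton_of_isTorsionBySet hm hI₀tors)
  · have : Module.Projective _ (P.complex.X 0) :=
      (IsProjective.iff_projective _).mpr (P.projective 0)
    have := hP 0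
    have := hP 1
    have := hP 2
    have := P.finitePresentation_ker_π_f_zero
    have := projective_of_finitePresentation_ker hm2 hfg
      ((ModuleCat.epi_iff_surjective (P.π.f 0)).mp inferInstance)
    exact ⟨0, .of_equiv
      (HomologicalComplex.singleObjXSelf (ComplexShape.down ℕ) 0 M).toLinearEquiv⟩

end
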